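/- For every ab-monomial v, φ_ub(v·b·b) = φ_ub(v·b)·(a − b). -/

import Mathlib

open scoped TensorProduct

noncomputable section

namespace CD


/-- ab-words: `false` represents the letter `a`, `true` represents the letter `b`. -/
abbrev Word := List Bool

/-- The free associative ℤ-algebra ℤ⟨a,b⟩ on two noncommuting variables. -/
abbrev ZAB := MonoidAlgebra ℤ (FreeMonoid Bool)

/-- The ab-monomial associated to a word. -/
def mon (w : Word) : ZAB := MonoidAlgebra.single (FreeMonoid.ofList w) 1

/-- The variable `a`. -/
def genA : ZAB := mon [false]
/-- The variable `b`. -/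
def genB : ZAB := mon [true]
/-- `c = a + b`. -/
def genC : ZAB := genA + genB
/-- `d = ab + ba`. -/
def genD : ZAB := genA * genB + genB * genA
/-- `a - b`. -/
def amb : ZAB := genA - genB

/-- Extend a function defined on ab-monomials to a ℤ-linear map on ℤ⟨a,b⟩. -/
def lin (f : Word → ZAB) : ZAB →ₗ[ℤ] ZAB :=
  Finsupp.lift ZAB ℤ (FreeMonoid Bool) (fun w => f (FreeMonoid.toList w)) ∘ₗ
    (MonoidAlgebra.coeffLinearEquiv ℤ).toLinearMap

/-- κ : κ(aᵐ) = (a-b)ᵐ, and 0 on all other ab-monomials. -/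
def kappaW (w : Word) : ZAB :=
  if ∀ x ∈ w, x = false then amb ^ w.length else 0

/-- β : β(bᵐ) = (a-b)ᵐ, and 0 on all other ab-monomials. -/
def betaW (w : Word) : ZAB :=
  if ∀ x ∈ w, x = true then amb ^ w.length else 0

/-- η : η(bᵐaᵏ) = 2·(a-b)^{m+k}, and 0 on all other ab-monomials. -/
def etaW (w : Word) : ZAB :=
  if List.IsChain (· ≥ ·) w then (2 : ℤ) • amb ^ w.length else 0

/-- λ_t : λ_t(bᵐ) = (a-b)ᵐ, λ_t(bᵐa) = (a-b)^{m+1}, and 0 on all other ab-monomials. -/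
def lamTW (w : Word) : ZAB :=
  if List.IsChain (· ≥ ·) w ∧ w.count false ≤ 1 then amb ^ w.length else 0

/-- λ_ub = η - 2·β. -/
def lamUbW (w : Word) : ZAB := etaW w - (2 : ℤ) • betaW w

/-- ω : first replace each occurrence of ab by 2d, then each remaining letter by c. -/
def omegaW : Word → ZAB
  | [] => 1
  | false :: true :: w => ((2 : ℤ) • genD) * omegaW w
  | _ :: w => genC * omegaW w

/-- H′ : removes the last letter of an ab-monomial (`H′(1) = 0`). -/
def HpW (w : Word) : ZAB := if w = [] then 0 else mon w.dropLast

/-- r : r(1) = 0, r(v·a) = v, r(v·b) = 0. -/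
def rW (w : Word) : ZAB := if w.getLast? = some false then mon w.dropLast else 0

/-- The reversal involution on ab-monomials. -/
def revW (w : Word) : ZAB := mon w.reverse

/-- `conv F G (w) = Σ_w F(w₍₁₎)·b·G(w₍₂₎)`, the sum over the coproduct of the word `w`,
i.e. over all ways of removing one letter from `w`, splitting it in two pieces. -/
def conv (F G : Word → ZAB) (w : Word) : ZAB :=
  ∑ i ∈ Finset.range w.length, F (w.take i) * genB * G (w.drop (i + 1))

/-- `tailChain lam j (w) = Σ_w η(w₍₁₎)·b·η(w₍₂₎)·b ⋯ b·η(w₍ⱼ₎)·b·lam(w₍ⱼ₊₁₎)`: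
a chain of `j` η's followed by the map `lam`, summed over the iterated coproduct. -/
def tailChain (lam : Word → ZAB) : ℕ → Word → ZAB
  | 0 => lam
  | j + 1 => conv etaW (tailChain lam j)

/-- φ_k : φ_1 = κ and, for k ≥ 2, `φ_k(v) = Σ_v κ(v₍₁₎)·b·η(v₍₂₎)·b ⋯ b·η(v₍ₖ₎)`,
the sum over the iterated coproduct Δ^{k-1}. -/
def phiK : ℕ → Word → ZAB
  | 0 => fun _ => 0
  | 1 => kappaW
  | k + 2 => conv kappaW (tailChain etaW k)

/-- φ_{t,k} : φ_{t,1} = κ and, for k ≥ 2,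
`φ_{t,k}(v) = Σ_v κ(v₍₁₎)·b·η(v₍₂₎)·b ⋯ b·η(v₍ₖ₋₁₎)·b·λ_t(v₍ₖ₎)`. -/
def phiTK : ℕ → Word → ZAB
  | 0 => fun _ => 0
  | 1 => kappaW
  | k + 2 => conv kappaW (tailChain lamTW k)

/-- φ_{ub,k} : φ_{ub,1} = κ and, for k ≥ 2,
`φ_{ub,k}(v) = Σ_v κ(v₍₁₎)·b·η(v₍₂₎)·b ⋯ b·η(v₍ₖ₋₁₎)·b·λ_ub(v₍ₖ₎)`. -/
def phiUbK : ℕ → Word → ZAB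
  | 0 => fun _ => 0
  | 1 => kappaW
  | k + 2 => conv kappaW (tailChain lamUbW k)

/-- φ = Σ_{k ≥ 1} φ_k (on a word of length ℓ, only terms with k ≤ ℓ + 1 are nonzero). -/
def phiW (w : Word) : ZAB := ∑ k ∈ Finset.range (w.length + 2), phiK k w

/-- φ_t = Σ_{k ≥ 1} φ_{t,k}. -/
def phiTW (w : Word) : ZAB := ∑ k ∈ Finset.range (w.length + 2), phiTK k w

/-- φ_ub = Σ_{k ≥ 1} φ_{ub,k}. -/
def phiUbW (w : Word) : ZAB := ∑ k ∈ Finset.range (w.length + 2), phiUbK k w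

/-- The coproduct Δ on ℤ⟨a,b⟩: Δ(u₁u₂⋯uₙ) = Σᵢ u₁⋯u_{i-1} ⊗ u_{i+1}⋯uₙ. -/
def Delta : ZAB →ₗ[ℤ] (ZAB ⊗[ℤ] ZAB) :=
  Finsupp.lift (ZAB ⊗[ℤ] ZAB) ℤ (FreeMonoid Bool)
    (fun w => ∑ i ∈ Finset.range (FreeMonoid.toList w).length,
      mon ((FreeMonoid.toList w).take i) ⊗ₜ[ℤ] mon ((FreeMonoid.toList w).drop (i + 1))) ∘ₗ
    (MonoidAlgebra.coeffLinearEquiv ℤ).toLinearMap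

/-- For linear maps F, G, the linear map `u ⊗ w ↦ F(u)·b·G(w)`; applying it to Δ(v)
gives the Sweedler sum `Σ_v F(v₍₁₎)·b·G(v₍₂₎)`. -/
def sandwich (F G : ZAB →ₗ[ℤ] ZAB) : (ZAB ⊗[ℤ] ZAB) →ₗ[ℤ] ZAB :=
  TensorProduct.lift
    (((LinearMap.mul ℤ ZAB).comp ((LinearMap.mulRight ℤ genB).comp F)).compl₂ G)



/-!
Every word ending in `b` is killed by φ_ub, so both sides vanish. Indeed κ kills it, and so does
λ_ub = η - 2β: a word `u·b` lies in the support of η only if it is `bᵐ`, where η and 2β agree.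
In every term of the iterated coproduct of `u·b` the last tensor factor is either empty or again
ends in `b`, and λ_ub vanishes on both.
-/

lemma isChain_ge_append_true_iff (u : Word) :
    List.IsChain (· ≥ ·) (u ++ [true]) ↔ ∀ x ∈ u, x = true := by
  rw [List.isChain_iff_pairwise, List.pairwise_append]
  constructor
  · rintro ⟨-, -, hge⟩ x hx
    exact top_le_iff.mp (hge x hx true (List.mem_singleton_self true))
  · intro hu
    refine ⟨List.pairwise_of_forall_mem_list fun x hx y hy => ?_, List.pairwise_singleton _ _,
      fun x hx y hy => ?_⟩
    · rw [hu x hx, hu y hy]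
    · rw [hu x hx, List.mem_singleton.mp hy]

lemma lamUbW_nil : lamUbW [] = 0 := by
  simp [lamUbW, etaW, betaW, two_smul]

lemma lamUbW_append_true (u : Word) : lamUbW (u ++ [true]) = 0 := by
  have hall : (∀ x ∈ u ++ [true], x = true) ↔ ∀ x ∈ u, x = true := by simp
  unfold lamUbW etaW betaW
  simp only [isChain_ge_append_true_iff, hall]
  split_ifs <;> simp [two_smul]

lemma kappaW_append_true (u : Word) : kappaW (u ++ [true]) = 0 :=
  if_neg fun h => Bool.noConfusion (h true (by simp))

lemma conv_nil (F G : Word → ZAB) : conv F G [] = 0 := by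
  simp [conv]

lemma conv_append_true (F : Word → ZAB) {G : Word → ZAB} (hnil : G [] = 0)
    (hb : ∀ u, G (u ++ [true]) = 0) (u : Word) : conv F G (u ++ [true]) = 0 := by
  refine Finset.sum_eq_zero fun i hi => ?_
  have hsuffix : G ((u ++ [true]).drop (i + 1)) = 0 := by
    rcases Nat.lt_or_ge i u.length with hlt | hge
    · rw [List.drop_append, Nat.sub_eq_zero_of_le hlt, List.drop_zero]
      exact hb _
    · rw [List.drop_eq_nil_of_le (by rw [List.length_append, List.length_singleton]; omega)]
      exact hnil
  rw [hsuffix, mul_zero]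

lemma tailChain_nil {lam : Word → ZAB} (hnil : lam [] = 0) : ∀ j, tailChain lam j [] = 0
  | 0 => hnil
  | _ + 1 => conv_nil _ _

lemma tailChain_append_true {lam : Word → ZAB} (hnil : lam [] = 0)
    (hb : ∀ u, lam (u ++ [true]) = 0) : ∀ j u, tailChain lam j (u ++ [true]) = 0
  | 0 => hb
  | j + 1 => conv_append_true etaW (tailChain_nil hnil j) (tailChain_append_true hnil hb j)

lemma phiUbK_append_true (u : Word) : ∀ k, phiUbK k (u ++ [true]) = 0
  | 0 => rfl
  | 1 => kappaW_append_true u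
  | k + 2 => conv_append_true kappaW (tailChain_nil lamUbW_nil k)
      (tailChain_append_true lamUbW_nil lamUbW_append_true k) u

lemma phiUbW_append_true (u : Word) : phiUbW (u ++ [true]) = 0 :=
  Finset.sum_eq_zero fun k _ => phiUbK_append_true u k

/-- for every ab-monomial `v`, `φ_ub(v·b·b) = φ_ub(v·b)·(a-b)`. -/
theorem phiUb_bb (w : Word) :
    phiUbW (w ++ [true, true]) = phiUbW (w ++ [true]) * amb := by
  rw [show w ++ [true, true] = (w ++ [true]) ++ [true] by simp, phiUbW_append_true,
    phiUbW_append_true, zero_mul]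


end CD

end
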